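/- arXiv:1103.2102 — 2 statements merged into one kernel-verified Lean document; each statement's English description precedes it below -/
import Mathlib

section
/- Let ε ∈ (0,1), let n, d be positive integers, and let X = (x^1,…,x^n) be a sequence in [0,1)^d. Let x* ∈ [0,1]^d satisfy δ(x*) = sup_{x∈[0,1]^d} δ(x) and assume V_{x*} ≥ ε. Then the π^d-measure of the set { r ∈ [0,1]^d : δ(x*) − δ(r) ≤ ε } is at least ε^d. -/
/-!
Since `A(·, X)` is monotone, `δ(x*) - δ(r) ≤ V_{x*} - V_r` whenever `r ≤ x*` coordinatewise.
Hence the target set contains the box `[t • x*, x*]` with `t^d = 1 - ε / V_{x*}`, on which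
`V_r ≥ t^d V_{x*} = V_{x*} - ε`. As `π^d` is a product of measures with distribution function
`r ↦ r^d`, this box has measure `∏_j (1 - t^d) x*_j^d = (ε / V_{x*})^d V_{x*}^d = ε^d`.
-/

open Finset MeasureTheory

noncomputable def starVol {d : ℕ} (y : Fin d → ℝ) : ℝ := ∏ j, y j

noncomputable def countOpen {n d : ℕ} (X : Fin n → Fin d → ℝ) (y : Fin d → ℝ) : ℕ :=
  (Finset.univ.filter fun i => ∀ j, X i j < y j).card

/-- δ(y) = V_y - A(y,X)/n -/
noncomputable def delta {n d : ℕ} (X : Fin n → Fin d → ℝ) (y : Fin d → ℝ) : ℝ :=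
  starVol y - (countOpen X y : ℝ) / n

/-- The probability measure π^d on `[0,1]^d` with density `x ↦ ∏_j d·x_j^(d-1)` with
respect to the Lebesgue measure. -/
noncomputable def piMeas (d : ℕ) : Measure (Fin d → ℝ) :=
  (volume.restrict (Set.Icc (0 : Fin d → ℝ) 1)).withDensity
    (fun x => ENNReal.ofReal (∏ j, (d : ℝ) * x j ^ (d - 1)))

theorem countOpen_mono {n d : ℕ} (X : Fin n → Fin d → ℝ) {y z : Fin d → ℝ} (hyz : y ≤ z) :
    countOpen X y ≤ countOpen X z :=
  Finset.card_le_card <| Finset.monotone_filter_right _ fun _ _ hi j => (hi j).trans_le (hyz j)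

theorem delta_sub_delta_le_starVol_sub {n d : ℕ} (X : Fin n → Fin d → ℝ) {r y : Fin d → ℝ}
    (hry : r ≤ y) : delta X y - delta X r ≤ starVol y - starVol r := by
  have : (countOpen X r : ℝ) / n ≤ countOpen X y / n := by
    gcongr
    exact countOpen_mono X hry
  simp only [delta]
  linarith

theorem starVol_smul {d : ℕ} (t : ℝ) (y : Fin d → ℝ) : starVol (t • y) = t ^ d * starVol y := by
  simp [starVol, Finset.prod_mul_distrib]

theorem starVol_le_starVol {d : ℕ} {a b : Fin d → ℝ} (ha : 0 ≤ a) (hab : a ≤ b) :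
    starVol a ≤ starVol b :=
  Finset.prod_le_prod (fun j _ => ha j) fun j _ => hab j

theorem integral_natCast_mul_pow_pred (d : ℕ) (a b : ℝ) :
    ∫ r in a..b, (d : ℝ) * r ^ (d - 1) = b ^ d - a ^ d :=
  intervalIntegral.integral_eq_sub_of_hasDerivAt (fun r _ => hasDerivAt_pow d r)
    ((by fun_prop : Continuous fun r : ℝ => (d : ℝ) * r ^ (d - 1)).intervalIntegrable a b)

theorem piMeas_Icc {d : ℕ} {a b : Fin d → ℝ} (ha : 0 ≤ a) (hab : a ≤ b) (hb : b ≤ 1) :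
    piMeas d (Set.Icc a b) = ENNReal.ofReal (∏ j, (b j ^ d - a j ^ d)) := by
  set f : ℝ → ℝ := fun r => (d : ℝ) * r ^ (d - 1)
  have hf : Continuous f := by fun_prop
  have hsub : Set.Icc a b ⊆ Set.Icc 0 1 := Set.Icc_subset_Icc ha hb
  have hint : IntegrableOn (fun x : Fin d → ℝ => ∏ j, f (x j)) (Set.Icc a b) :=
    (continuous_finsetProd _ fun j _ => hf.comp (continuous_apply j)).integrableOn_Icc
  have hnonneg : 0 ≤ᵐ[volume.restrict (Set.Icc a b)] fun x => ∏ j, f (x j) :=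
    ae_restrict_of_forall_mem measurableSet_Icc fun x hx =>
      Finset.prod_nonneg fun j _ => mul_nonneg d.cast_nonneg (pow_nonneg ((ha j).trans (hx.1 j)) _)
  rw [piMeas, withDensity_apply _ measurableSet_Icc, Measure.restrict_restrict measurableSet_Icc,
    Set.inter_eq_left.mpr hsub, ← ofReal_integral_eq_lintegral_ofReal hint hnonneg,
    ← Set.pi_univ_Icc, volume_pi, Measure.restrict_pi_pi, integral_fintype_prod_eq_prod]
  congr 1
  refine Finset.prod_congr rfl fun j _ => ?_
  rw [integral_Icc_eq_integral_Ioc, ← intervalIntegral.integral_of_le (hab j),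
    integral_natCast_mul_pow_pred]

section Box

variable {d : ℕ} {t : ℝ} {y : Fin d → ℝ}

theorem Icc_smul_self_subset {n : ℕ} (X : Fin n → Fin d → ℝ) (ht₀ : 0 ≤ t) (hy₀ : 0 ≤ y)
    (hy₁ : y ≤ 1) :
    Set.Icc (t • y) y ⊆ {r | (∀ j, r j ∈ Set.Icc (0 : ℝ) 1) ∧
      delta X y - delta X r ≤ (1 - t ^ d) * starVol y} := by
  intro r ⟨hlo, hhi⟩
  have hty : 0 ≤ t • y := smul_nonneg ht₀ hy₀
  refine ⟨fun j => ⟨hty j |>.trans (hlo j), (hhi j).trans (hy₁ j)⟩, ?_⟩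
  calc delta X y - delta X r ≤ starVol y - starVol r := delta_sub_delta_le_starVol_sub X hhi
    _ ≤ starVol y - starVol (t • y) := by gcongr; exact starVol_le_starVol hty hlo
    _ = (1 - t ^ d) * starVol y := by rw [starVol_smul]; ring

theorem piMeas_Icc_smul_self (ht₀ : 0 ≤ t) (ht₁ : t ≤ 1) (hy₀ : 0 ≤ y) (hy₁ : y ≤ 1) :
    piMeas d (Set.Icc (t • y) y) = ENNReal.ofReal (((1 - t ^ d) * starVol y) ^ d) := by
  have hty : t • y ≤ y := fun j => mul_le_of_le_one_left (hy₀ j) ht₁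
  have hfactor : ∀ j, y j ^ d - (t • y) j ^ d = (1 - t ^ d) * y j ^ d := fun j => by
    simp only [Pi.smul_apply, smul_eq_mul]; ring
  rw [piMeas_Icc (smul_nonneg ht₀ hy₀) hty hy₁, Finset.prod_congr rfl fun j _ => hfactor j,
    Finset.prod_mul_distrib, Finset.prod_const, Finset.card_univ, Fintype.card_fin,
    Finset.prod_pow, mul_pow, starVol]

end Box

theorem stmt11_general (n d : ℕ) (hd : 0 < d) (ε : ℝ) (hε : ε ∈ Set.Ioo (0 : ℝ) 1)
    (X : Fin n → Fin d → ℝ)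
    (xs : Fin d → ℝ) (hxs : ∀ j, xs j ∈ Set.Icc (0 : ℝ) 1)
    (hV : ε ≤ starVol xs) :
    ENNReal.ofReal (ε ^ d) ≤
      piMeas d {r : Fin d → ℝ | (∀ j, r j ∈ Set.Icc (0 : ℝ) 1) ∧
        delta X xs - delta X r ≤ ε} := by
  have hV₀ : 0 < starVol xs := hε.1.trans_le hV
  set c := 1 - ε / starVol xs
  have hc₀ : 0 ≤ c := sub_nonneg.mpr ((div_le_one hV₀).mpr hV)
  have hc₁ : c ≤ 1 := sub_le_self _ (div_nonneg hε.1.le hV₀.le)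
  set t := c ^ (d : ℝ)⁻¹
  have htd : 1 - t ^ d = ε / starVol xs := by
    rw [Real.rpow_inv_natCast_pow hc₀ hd.ne']; ring
  have hε_eq : (1 - t ^ d) * starVol xs = ε := by rw [htd, div_mul_cancel₀ _ hV₀.ne']
  have ht₀ : 0 ≤ t := Real.rpow_nonneg hc₀ _
  have ht₁ : t ≤ 1 := Real.rpow_le_one hc₀ hc₁ (by positivity)
  have hxs₀ : 0 ≤ xs := fun j => (hxs j).1
  have hxs₁ : xs ≤ 1 := fun j => (hxs j).2
  calc ENNReal.ofReal (ε ^ d) = piMeas d (Set.Icc (t • xs) xs) := by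
        rw [piMeas_Icc_smul_self ht₀ ht₁ hxs₀ hxs₁, hε_eq]
    _ ≤ _ := measure_mono (hε_eq ▸ Icc_smul_self_subset X ht₀ hxs₀ hxs₁)

/-- If `x*` maximizes δ over `[0,1]^d` and `V_{x*} ≥ ε`, then the π^d-measure of
`{r ∈ [0,1]^d : δ(x*) - δ(r) ≤ ε}` is at least `ε^d`. -/
theorem stmt11 (n d : ℕ) (hn : 0 < n) (hd : 0 < d) (ε : ℝ) (hε : ε ∈ Set.Ioo (0 : ℝ) 1)
    (X : Fin n → Fin d → ℝ) (hX : ∀ i j, X i j ∈ Set.Ico (0 : ℝ) 1)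
    (xs : Fin d → ℝ) (hxs : ∀ j, xs j ∈ Set.Icc (0 : ℝ) 1)
    (hmax : ∀ x : Fin d → ℝ, (∀ j, x j ∈ Set.Icc (0 : ℝ) 1) → delta X x ≤ delta X xs)
    (hV : ε ≤ starVol xs) :
    ENNReal.ofReal (ε ^ d) ≤
      piMeas d {r : Fin d → ℝ | (∀ j, r j ∈ Set.Icc (0 : ℝ) 1) ∧
        delta X xs - delta X r ≤ ε} :=
  stmt11_general n d hd ε hε X xs hxs hV
end

section
/- Let d ≥ 2 and let ε ∈ (0,1) and z ∈ [0,1]^d with V_z > ε. Then λ^d(A_ε(z)) ≥ (1/d!) · ε^d / V_z^{d−1} ≥ ε^d/d!. -/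
/-!
Write `V = V_z` and `c = ε / V`. The affine map `v ↦ z * (1 - v)` (coordinatewise) sends the
corner simplex `{v ≥ 0, ∑ v ≤ c}` into `A_ε(z)`: its image points lie below `z`, and by the
Weierstrass product inequality `∏ (1 - v_j) ≥ 1 - ∑ v_j` their volume drops by at most
`V * c = ε`. The map scales Lebesgue measure by `V`, and the corner simplex has volume
`c^d / d!` (it is one of the `2^d` orthant pieces of the `ℓ¹`-ball), so
`λ^d(A_ε(z)) ≥ V * (ε / V)^d / d! = ε^d / (d! V^{d-1})`.
-/

open Finset MeasureTheory ENNReal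

/-- The set `A_ε(z) = {x ∈ [0,1]^d : x ≤ z, V_z - V_x ≤ ε}`. -/
def Aeps (d : ℕ) (ε : ℝ) (z : Fin d → ℝ) : Set (Fin d → ℝ) :=
  {x | (∀ j, x j ∈ Set.Icc (0 : ℝ) 1) ∧ (∀ j, x j ≤ z j) ∧ starVol z - starVol x ≤ ε}

theorem one_sub_sum_le_prod_one_sub {ι : Type*} (s : Finset ι) {v : ι → ℝ}
    (h0 : ∀ i ∈ s, 0 ≤ v i) (h1 : ∀ i ∈ s, v i ≤ 1) :
    1 - ∑ i ∈ s, v i ≤ ∏ i ∈ s, (1 - v i) := by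
  induction s using Finset.cons_induction with
  | empty => simp
  | cons a s ha ih =>
    rw [prod_cons, sum_cons]
    have ih := ih (fun i hi => h0 i (mem_cons_of_mem hi)) (fun i hi => h1 i (mem_cons_of_mem hi))
    have hva0 := h0 a (mem_cons_self a s)
    have hva1 := h1 a (mem_cons_self a s)
    have hs0 : 0 ≤ ∑ i ∈ s, v i := sum_nonneg fun i hi => h0 i (mem_cons_of_mem hi)
    nlinarith [mul_le_mul_of_nonneg_left ih (sub_nonneg.2 hva1)]

section Volume

variable {ι : Type*} [Fintype ι]

theorem volume_image_mul_left (a : ι → ℝ) (s : Set (ι → ℝ)) :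
    volume ((a * ·) '' s) = ENNReal.ofReal |∏ i, a i| * volume s := by
  classical
  have hL : (a * ·) = Matrix.toLin' (Matrix.diagonal a) := by
    ext v i
    simp [Matrix.mulVec_diagonal]
  rw [hL, Measure.addHaar_image_linearMap, LinearMap.det_toLin', Matrix.det_diagonal]

def cornerSimplex (ι : Type*) [Fintype ι] (r : ℝ) : Set (ι → ℝ) :=
  {v | (∀ i, 0 ≤ v i) ∧ ∑ i, v i ≤ r}

theorem volume_sum_abs_le [Nonempty ι] (r : ℝ) :
    volume {x : ι → ℝ | ∑ i, |x i| ≤ r} =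
      ENNReal.ofReal r ^ Fintype.card ι *
        ENNReal.ofReal (2 ^ Fintype.card ι / (Fintype.card ι).factorial) := by
  have h := volume_sum_rpow_le ι le_rfl r
  simp only [Real.rpow_one, div_one] at h
  rw [show (1 + 1 : ℝ) = (1 : ℕ) + 1 by norm_num, Real.Gamma_nat_eq_factorial,
    Real.Gamma_nat_eq_factorial] at h
  simpa using h

theorem volume_sum_abs_le_le_two_pow_mul (r : ℝ) :
    volume {x : ι → ℝ | ∑ i, |x i| ≤ r} ≤ 2 ^ Fintype.card ι * volume (cornerSimplex ι r) := by
  classical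
  let sign (σ : ι → Bool) : ι → ℝ := fun i => if σ i then 1 else -1
  have hcover : {x : ι → ℝ | ∑ i, |x i| ≤ r} ⊆
      ⋃ σ : ι → Bool, (sign σ * ·) '' cornerSimplex ι r := by
    intro x hx
    refine Set.mem_iUnion.2 ⟨fun i => decide (0 ≤ x i), fun i => |x i|,
      ⟨fun i => abs_nonneg _, hx⟩, funext fun i => ?_⟩
    by_cases h : 0 ≤ x i
    · simp [sign, h, abs_of_nonneg h]
    · simp [sign, h, abs_of_neg (not_le.1 h)]
  have hsign (σ : ι → Bool) : |∏ i, sign σ i| = 1 := by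
    rw [abs_prod]
    exact prod_eq_one fun i _ => by by_cases h : σ i <;> simp [sign, h]
  calc volume {x : ι → ℝ | ∑ i, |x i| ≤ r}
      ≤ volume (⋃ σ : ι → Bool, (sign σ * ·) '' cornerSimplex ι r) := measure_mono hcover
    _ ≤ ∑ σ : ι → Bool, volume ((sign σ * ·) '' cornerSimplex ι r) :=
      measure_iUnion_fintype_le _ _
    _ = 2 ^ Fintype.card ι * volume (cornerSimplex ι r) := by
      simp [volume_image_mul_left, hsign]

theorem ofReal_pow_div_factorial_le_volume_cornerSimplex [Nonempty ι] {r : ℝ} (hr : 0 ≤ r) :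
    ENNReal.ofReal (r ^ Fintype.card ι / (Fintype.card ι).factorial) ≤
      volume (cornerSimplex ι r) := by
  set n := Fintype.card ι
  have h2n : (2 : ℝ≥0∞) ^ n = ENNReal.ofReal (2 ^ n) := by
    rw [ENNReal.ofReal_pow zero_le_two, ENNReal.ofReal_ofNat]
  have hball :
      volume {x : ι → ℝ | ∑ i, |x i| ≤ r} = 2 ^ n * ENNReal.ofReal (r ^ n / n.factorial) := by
    rw [volume_sum_abs_le, h2n, ← ENNReal.ofReal_pow hr, ← ENNReal.ofReal_mul (by positivity),
      ← ENNReal.ofReal_mul (by positivity)]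
    congr 1
    ring
  refine (ENNReal.mul_le_mul_iff_right (pow_ne_zero n two_ne_zero) (pow_ne_top ofNat_ne_top)).1 ?_
  exact hball ▸ volume_sum_abs_le_le_two_pow_mul r

end Volume

theorem image_cornerSimplex_subset_Aeps {d : ℕ} {ε : ℝ} {z : Fin d → ℝ}
    (hz : ∀ j, z j ∈ Set.Icc (0 : ℝ) 1) (hV0 : 0 < starVol z) (hεV : ε ≤ starVol z) :
    (fun v => z - z * v) '' cornerSimplex (Fin d) (ε / starVol z) ⊆ Aeps d ε z := by
  rintro _ ⟨v, ⟨hv0, hvsum⟩, rfl⟩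
  dsimp only
  have hx (j : Fin d) : (z - z * v) j = z j * (1 - v j) := by
    simp only [Pi.sub_apply, Pi.mul_apply]
    ring
  have hv1 (j : Fin d) : v j ≤ 1 :=
    (single_le_sum (fun i _ => hv0 i) (mem_univ j)).trans (hvsum.trans ((div_le_one hV0).2 hεV))
  have hprod : starVol (z - z * v) = starVol z * ∏ j, (1 - v j) := by
    simp only [starVol, hx, prod_mul_distrib]
  have hweier := one_sub_sum_le_prod_one_sub univ (fun i _ => hv0 i) (fun i _ => hv1 i)
  refine ⟨fun j => ?_, fun j => ?_, ?_⟩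
  · rw [hx]
    exact ⟨mul_nonneg (hz j).1 (sub_nonneg.2 (hv1 j)),
      mul_le_one₀ (hz j).2 (sub_nonneg.2 (hv1 j)) (by linarith [hv0 j])⟩
  · rw [hx]
    nlinarith [hv0 j, (hz j).1]
  · rw [hprod]
    have hc : starVol z * (ε / starVol z) = ε := mul_div_cancel₀ ε hV0.ne'
    nlinarith [mul_le_mul_of_nonneg_left hvsum hV0.le, mul_le_mul_of_nonneg_left hweier hV0.le]

theorem volume_image_sub_mul {d : ℕ} {z : Fin d → ℝ} (hz : ∀ j, 0 ≤ z j)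
    (s : Set (Fin d → ℝ)) :
    volume ((fun v => z - z * v) '' s) = ENNReal.ofReal (starVol z) * volume s := by
  have himage : (fun v => z - z * v) '' s = (z + ·) '' ((-z * ·) '' s) := by
    rw [Set.image_image]
    simp only [neg_mul, ← sub_eq_add_neg]
  have hdet : |∏ j, (-z) j| = starVol z := by
    rw [abs_prod]
    exact prod_congr rfl fun j _ => by rw [Pi.neg_apply, abs_neg, abs_of_nonneg (hz j)]
  rw [himage, Set.image_add_left, measure_preimage_add, volume_image_mul_left, hdet]

/-- For `d ≥ 2`, `ε ∈ (0,1)` and `z ∈ [0,1]^d` with `V_z > ε`,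
`λ^d(A_ε(z)) ≥ (1/d!)·ε^d/V_z^{d-1} ≥ ε^d/d!`. -/
theorem stmt16 (d : ℕ) (hd : 2 ≤ d) (ε : ℝ) (hε : ε ∈ Set.Ioo (0 : ℝ) 1)
    (z : Fin d → ℝ) (hz : ∀ j, z j ∈ Set.Icc (0 : ℝ) 1) (hV : ε < starVol z) :
    ENNReal.ofReal ((1 / (d.factorial : ℝ)) * ε ^ d / starVol z ^ (d - 1)) ≤
      volume (Aeps d ε z) ∧
    ε ^ d / (d.factorial : ℝ) ≤ (1 / (d.factorial : ℝ)) * ε ^ d / starVol z ^ (d - 1) := by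
  have hε0 := hε.1
  have hV0 : 0 < starVol z := hε0.trans hV
  have hV1 : starVol z ≤ 1 := prod_le_one (fun j _ => (hz j).1) (fun j _ => (hz j).2)
  have : Nonempty (Fin d) := ⟨⟨0, by omega⟩⟩
  have hsimplex := ofReal_pow_div_factorial_le_volume_cornerSimplex (ι := Fin d)
    (div_nonneg hε0.le hV0.le)
  rw [Fintype.card_fin] at hsimplex
  refine ⟨?_, ?_⟩
  · calc ENNReal.ofReal ((1 / (d.factorial : ℝ)) * ε ^ d / starVol z ^ (d - 1))
        = ENNReal.ofReal (starVol z) * ENNReal.ofReal ((ε / starVol z) ^ d / d.factorial) := by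
          have hVd : starVol z ^ d = starVol z ^ (d - 1) * starVol z := by
            rw [← pow_succ, Nat.sub_add_cancel (by omega)]
          rw [← ENNReal.ofReal_mul hV0.le, div_pow, hVd]
          congr 1
          field_simp
      _ ≤ ENNReal.ofReal (starVol z) * volume (cornerSimplex (Fin d) (ε / starVol z)) := by
          gcongr
      _ = volume ((fun v => z - z * v) '' cornerSimplex (Fin d) (ε / starVol z)) :=
          (volume_image_sub_mul (fun j => (hz j).1) _).symm
      _ ≤ volume (Aeps d ε z) := measure_mono (image_cornerSimplex_subset_Aeps hz hV0 hV.le)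
  · rw [one_div_mul_eq_div]
    exact le_div_self (by positivity) (pow_pos hV0 _) (pow_le_one₀ hV0.le hV1)
end
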